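/- Fix a real parameter η ≥ 1 and a real number r with 0 ≤ r ≤ 1. For each f ∈ [0,1] let V(f) denote the infimum of s(α) over all α = (α₁, α₂, α_sr) ∈ [0,1] × [0,1] × [0,η] satisfying min(I_S(α,f), I_D(α,f)) ≤ r. Then max_{f ∈ [0,1]} V(f) = min{η+2, 4} − 3r, and this maximum is attained at f = 1/3. -/

import Mathlib

/-!
Each cut can be put in outage at a cost independent of `f`: `α = (r, 1, r)` gives `I_S = r`
with `s = η + 2 − 3r`, and `α = (r, 0, η)` gives `I_D = r` with `s = 4 − 3r`; this is the upper
bound. At `f = 1/3` the outage conditions become the linear constraints `2α₁ + α_sr ≤ 3r` and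
`3α₁ + 2α₂ ≤ 3r`, which on the box force `s ≥ η + 2 − 3r` and `s ≥ 4 − 3r` respectively.
Larger `f` only enlarges `I_S` and smaller `f` only enlarges `I_D`, so `1/3` balances the cuts.
-/

open Set

/-- The SNR exponent `s(α)` of the joint density of channel exponents
`α = (α₁, α₂, α_sr)`. -/
noncomputable def sExp (η : ℝ) (a : ℝ × ℝ × ℝ) : ℝ :=
  if a.1 + a.2.1 ≤ 1 then η + 4 - 3 * a.1 - 2 * a.2.1 - a.2.2
  else η + 3 - 2 * a.1 - a.2.1 - a.2.2

/-- Source-side cut mutual information exponent `I_S(α, f)`. -/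
noncomputable def IS (a : ℝ × ℝ × ℝ) (f : ℝ) : ℝ :=
  a.1 + f * max (a.2.2 - a.1) 0

/-- Destination-side cut mutual information exponent `I_D(α, f)`. -/
noncomputable def ID (a : ℝ × ℝ × ℝ) (f : ℝ) : ℝ :=
  a.1 + (1 - f) * a.2.1

/-- The blind-scheduling diversity order for a fixed schedule `f`: the
infimum of `s(α)` over the outage region at multiplexing gain `r`. -/
noncomputable def Vblind (η r f : ℝ) : ℝ :=
  sInf {x : ℝ | ∃ a : ℝ × ℝ × ℝ, a.1 ∈ Icc (0:ℝ) 1 ∧ a.2.1 ∈ Icc (0:ℝ) 1 ∧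
    a.2.2 ∈ Icc (0:ℝ) η ∧ min (IS a f) (ID a f) ≤ r ∧ sExp η a = x}

lemma sExp_nonneg {η : ℝ} {a : ℝ × ℝ × ℝ} (h₁ : a.1 ≤ 1) (h₂ : a.2.1 ≤ 1) (h₃ : a.2.2 ≤ η) :
    0 ≤ sExp η a := by
  unfold sExp
  split_ifs <;> linarith

lemma Vblind_le_sExp {η r f : ℝ} {a : ℝ × ℝ × ℝ} (h₁ : a.1 ∈ Icc (0:ℝ) 1)
    (h₂ : a.2.1 ∈ Icc (0:ℝ) 1) (h₃ : a.2.2 ∈ Icc (0:ℝ) η) (hout : min (IS a f) (ID a f) ≤ r) :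
    Vblind η r f ≤ sExp η a := by
  refine csInf_le ⟨0, ?_⟩ ⟨a, h₁, h₂, h₃, hout, rfl⟩
  rintro _ ⟨b, hb₁, hb₂, hb₃, -, rfl⟩
  exact sExp_nonneg hb₁.2 hb₂.2 hb₃.2

lemma le_Vblind {η r f c : ℝ} (hη : 0 ≤ η) (hr : 0 ≤ r)
    (h : ∀ a : ℝ × ℝ × ℝ, a.1 ∈ Icc (0:ℝ) 1 → a.2.1 ∈ Icc (0:ℝ) 1 → a.2.2 ∈ Icc (0:ℝ) η →
      min (IS a f) (ID a f) ≤ r → c ≤ sExp η a) :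
    c ≤ Vblind η r f := by
  have hzero : min (IS (0, 0, 0) f) (ID (0, 0, 0) f) ≤ r := by simpa [IS, ID] using hr
  refine le_csInf ⟨_, (0, 0, 0), by simp, by simp, by simp [hη], hzero, rfl⟩ ?_
  rintro _ ⟨a, h₁, h₂, h₃, hout, rfl⟩
  exact h a h₁ h₂ h₃ hout

lemma Vblind_le_four_sub {η r : ℝ} (f : ℝ) (hη : 0 ≤ η) (hr₀ : 0 ≤ r) (hr₁ : r ≤ 1) :
    Vblind η r f ≤ 4 - 3 * r := by
  have hID : ID (r, 0, η) f = r := by simp [ID]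
  have hs : sExp η (r, 0, η) = 4 - 3 * r := by
    rw [sExp, if_pos (by simpa using hr₁)]
    ring
  calc Vblind η r f ≤ sExp η (r, 0, η) :=
        Vblind_le_sExp ⟨hr₀, hr₁⟩ (by simp) ⟨hη, le_rfl⟩ ((min_le_right _ _).trans hID.le)
    _ = 4 - 3 * r := hs

lemma Vblind_le_add_two_sub {η r : ℝ} (f : ℝ) (hrη : r ≤ η) (hr₀ : 0 ≤ r) (hr₁ : r ≤ 1) :
    Vblind η r f ≤ η + 2 - 3 * r := by
  have hIS : IS (r, 1, r) f = r := by simp [IS]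
  have hs : sExp η (r, 1, r) = η + 2 - 3 * r := by
    unfold sExp
    split_ifs with h
    · obtain rfl : r = 0 := le_antisymm (by simpa using h) hr₀
      ring
    · ring
  calc Vblind η r f ≤ sExp η (r, 1, r) :=
        Vblind_le_sExp ⟨hr₀, hr₁⟩ (by simp) ⟨hr₀, hrη⟩ ((min_le_left _ _).trans hIS.le)
    _ = η + 2 - 3 * r := hs

lemma add_two_sub_le_sExp_of_IS_le {η r f : ℝ} {a : ℝ × ℝ × ℝ} (hf : 1 / 3 ≤ f)
    (h₂ : a.2.1 ≤ 1) (hS : IS a f ≤ r) : η + 2 - 3 * r ≤ sExp η a := by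
  have hmax : a.2.2 - a.1 ≤ max (a.2.2 - a.1) 0 := le_max_left _ _
  have hscale : 1 / 3 * max (a.2.2 - a.1) 0 ≤ f * max (a.2.2 - a.1) 0 :=
    mul_le_mul_of_nonneg_right hf (le_max_right _ _)
  have hcut : 2 * a.1 + a.2.2 ≤ 3 * r := by unfold IS at hS; linarith
  unfold sExp
  split_ifs <;> linarith

lemma four_sub_le_sExp_of_ID_le {η r f : ℝ} {a : ℝ × ℝ × ℝ} (hf : f ≤ 1 / 3)
    (h₂ : 0 ≤ a.2.1) (h₃ : a.2.2 ≤ η) (hD : ID a f ≤ r) : 4 - 3 * r ≤ sExp η a := by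
  have hscale : 2 / 3 * a.2.1 ≤ (1 - f) * a.2.1 :=
    mul_le_mul_of_nonneg_right (by linarith) h₂
  have hcut : 3 * a.1 + 2 * a.2.1 ≤ 3 * r := by unfold ID at hD; linarith
  unfold sExp
  split_ifs <;> linarith

/-- In the low-rate region `r ≤ 1`, blind scheduling is DMT optimal:
`max_{f ∈ [0,1]} V(f) = min{η+2, 4} − 3r`, attained at `f = 1/3`. -/
theorem blind_schedule_optimal (η r : ℝ) (hη : 1 ≤ η) (hr0 : 0 ≤ r) (hr1 : r ≤ 1) :
    (∀ f ∈ Icc (0:ℝ) 1, Vblind η r f ≤ min (η + 2) 4 - 3 * r) ∧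
    Vblind η r (1/3) = min (η + 2) 4 - 3 * r := by
  have hV_le : ∀ f, Vblind η r f ≤ min (η + 2) 4 - 3 * r := fun f => by
    rw [← min_sub_sub_right]
    exact le_min (Vblind_le_add_two_sub f (by linarith) hr0 hr1)
      (Vblind_le_four_sub f (by linarith) hr0 hr1)
  refine ⟨fun f _ => hV_le f, le_antisymm (hV_le _) (le_Vblind (by linarith) hr0 ?_)⟩
  intro a _ h₂ h₃ hout
  rcases min_le_iff.mp hout with hS | hD
  · linarith [min_le_left (η + 2) 4, add_two_sub_le_sExp_of_IS_le le_rfl h₂.2 hS (η := η)]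
  · linarith [min_le_right (η + 2) 4, four_sub_le_sExp_of_ID_le le_rfl h₂.1 h₃.2 hD]
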